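/- Let W be a unilateral weighted shift on ℓ² with positive weights (w_n) satisfying inf_n w_n > 0, and let k be a positive integer. Then W^k satisfies P ≤ W^{*k}(W^{*k}W^k)^{-1}W^k (where P is the orthogonal projection onto the closure of ran(W^k)) if and only if ∏_{j=0}^{k-1} w_{n+j}/w_{k+n+j} ≥ 1 for every integer n ≥ k. -/

import Mathlib

/-!
`W^k` sends `e n` to `v n • e (n + k)` with `v n = powWeight w k n ≥ c^k > 0`. Hence
`W^{*k} W^k` is diagonal in the basis `e` with entries `v n ^ 2 ≥ c^{2k}`, so it is invertible,
and `W^{*k} (W^{*k} W^k)⁻¹ W^k` is diagonal with entries `(v n / v (n + k))^2`. An orthogonal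
projection onto the closure of `ran W^k` is diagonal as well: it fixes
`e n = W^k (e (n - k)) / v (n - k)` for `n ≥ k` and kills `e n ∈ ker W^{*k} = (ran W^k)ᗮ` for
`n < k`. A diagonal operator is positive iff its entries are nonnegative, so the operator
inequality amounts to `v n / v (n + k) ≥ 1` for `n ≥ k`, which is the product condition.
-/

open ContinuousLinearMap

open scoped InnerProductSpace

namespace HilbertBasis

variable {ι 𝕜 E : Type*} [RCLike 𝕜] [NormedAddCommGroup E] [InnerProductSpace 𝕜 E]
  (e : HilbertBasis ι 𝕜 E)

theorem ext_inner_left {x y : E} (h : ∀ i, ⟪e i, x⟫_𝕜 = ⟪e i, y⟫_𝕜) : x = y :=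
  e.repr.injective <| lp.ext <| funext fun i => by simp only [e.repr_apply_apply, h]

theorem adjoint_apply_eq_of_inner [CompleteSpace E] {F : Type*} [NormedAddCommGroup F]
    [InnerProductSpace 𝕜 F] [CompleteSpace F] (T : E →L[𝕜] F) {y : F} {z : E}
    (h : ∀ i, ⟪T (e i), y⟫_𝕜 = ⟪e i, z⟫_𝕜) : adjoint T y = z :=
  e.ext_inner_left fun i => by rw [adjoint_inner_right, h]

variable [CompleteSpace E] {e} {T : E →L[𝕜] E} {d : ι → ℝ}

theorem inner_apply_of_apply_eq_smul (hT : ∀ i, T (e i) = (d i : 𝕜) • e i) (x : E)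
    (i : ι) : ⟪T x, e i⟫_𝕜 = d i * ⟪x, e i⟫_𝕜 := by
  have hadj : adjoint T (e i) = (d i : 𝕜) • e i := e.adjoint_apply_eq_of_inner T fun j => by
    rw [hT, inner_smul_left, inner_smul_right, RCLike.conj_ofReal]
    rcases eq_or_ne j i with rfl | hji
    · rfl
    · rw [e.orthonormal.inner_eq_zero hji, mul_zero, mul_zero]
  rw [← adjoint_inner_right, hadj, inner_smul_right]

theorem isPositive_of_apply_eq_smul (hT : ∀ i, T (e i) = (d i : 𝕜) • e i)
    (hd : ∀ i, 0 ≤ d i) : T.IsPositive := by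
  refine ⟨fun x y => ?_, fun x => ?_⟩
  · have hT' : ∀ i, ⟪e i, T y⟫_𝕜 = d i * ⟪e i, y⟫_𝕜 := fun i => by
      rw [← inner_conj_symm, inner_apply_of_apply_eq_smul hT, map_mul, RCLike.conj_ofReal,
        inner_conj_symm]
    rw [← e.tsum_inner_mul_inner, ← e.tsum_inner_mul_inner]
    exact tsum_congr fun i => by
      rw [coe_coe, inner_apply_of_apply_eq_smul hT, hT', mul_left_comm, mul_assoc]
  · refine ((e.hasSum_inner_mul_inner (T x) x).mapL RCLike.reCLM).nonneg fun i => ?_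
    rw [RCLike.reCLM_apply, inner_apply_of_apply_eq_smul hT, mul_assoc, RCLike.re_ofReal_mul,
      inner_mul_symm_re_eq_norm]
    exact mul_nonneg (hd i) (norm_nonneg _)

theorem isPositive_iff_of_apply_eq_smul (hT : ∀ i, T (e i) = (d i : 𝕜) • e i) :
    T.IsPositive ↔ ∀ i, 0 ≤ d i := by
  refine ⟨fun h i => ?_, isPositive_of_apply_eq_smul hT⟩
  simpa [hT, inner_smul_left, inner_self_eq_norm_sq_to_K, e.orthonormal.norm_eq_one] using
    h.re_inner_nonneg_left (e i)

theorem isUnit_of_apply_eq_smul (hT : ∀ i, T (e i) = (d i : 𝕜) • e i) {c : ℝ} (hc : 0 < c)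
    (hcd : ∀ i, c ≤ d i) : IsUnit T := by
  have hpos : (T - (c : 𝕜) • 1).IsPositive :=
    isPositive_of_apply_eq_smul (e := e) (d := fun i => d i - c)
      (fun i => by
        rw [sub_apply, hT, smul_apply, one_apply_eq_self, RCLike.ofReal_sub, sub_smul])
      (fun i => sub_nonneg.2 (hcd i))
  refine isUnit_of_forall_le_norm_inner_map T (c := ⟨c, hc.le⟩) hc fun x => ?_
  have hx := hpos.re_inner_nonneg_left x
  rw [sub_apply, inner_sub_left, map_sub, smul_apply, one_apply_eq_self, inner_smul_left,
    inner_self_eq_norm_sq_to_K, RCLike.conj_ofReal, ← RCLike.ofReal_pow, ← RCLike.ofReal_mul,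
    RCLike.ofReal_re, sub_nonneg] at hx
  calc ‖x‖ ^ 2 * c = c * ‖x‖ ^ 2 := mul_comm _ _
    _ ≤ RCLike.re ⟪T x, x⟫_𝕜 := hx
    _ ≤ ‖⟪T x, x⟫_𝕜‖ := RCLike.re_le_norm _

end HilbertBasis

theorem IsUnit.ringInverse_apply_of_apply_eq_smul {𝕜 E : Type*}
    [NontriviallyNormedField 𝕜] [NormedAddCommGroup E] [NormedSpace 𝕜 E] {T : E →L[𝕜] E}
    (hT : IsUnit T) {x : E} {a : 𝕜} (ha : a ≠ 0) (h : T x = a • x) :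
    Ring.inverse T x = a⁻¹ • x :=
  calc Ring.inverse T x = Ring.inverse T (a⁻¹ • T x) := by
        rw [h, smul_smul, inv_mul_cancel₀ ha, one_smul]
    _ = a⁻¹ • x := by
        rw [map_smul, ← mul_apply_eq_comp, Ring.inverse_mul_cancel _ hT, one_apply_eq_self]

def powWeight (w : ℕ → ℝ) (k n : ℕ) : ℝ := ∏ j ∈ Finset.range k, w (n + j)

theorem powWeight_succ (w : ℕ → ℝ) (k n : ℕ) :
    powWeight w (k + 1) n = w n * powWeight w k (n + 1) := by
  simp only [powWeight, Finset.prod_range_succ', add_zero, mul_comm (w n), add_assoc,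
    add_comm 1]

theorem powWeight_pos {w : ℕ → ℝ} (hw : ∀ n, 0 < w n) (k n : ℕ) : 0 < powWeight w k n :=
  Finset.prod_pos fun j _ => hw (n + j)

theorem pow_le_powWeight {w : ℕ → ℝ} {c : ℝ} (hc : 0 ≤ c) (hcw : ∀ n, c ≤ w n)
    (k n : ℕ) : c ^ k ≤ powWeight w k n :=
  calc c ^ k = ∏ _j ∈ Finset.range k, c := by rw [Finset.prod_const, Finset.card_range]
    _ ≤ powWeight w k n := Finset.prod_le_prod (fun _ _ => hc) fun j _ => hcw (n + j)

theorem powWeight_div_powWeight_add (w : ℕ → ℝ) (k n : ℕ) :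
    powWeight w k n / powWeight w k (n + k) =
      ∏ j ∈ Finset.range k, w (n + j) / w (k + n + j) := by
  simp only [powWeight, Finset.prod_div_distrib, add_comm n k]

namespace WeightedShift

variable {𝕜 E : Type*} [RCLike 𝕜] [NormedAddCommGroup E] [InnerProductSpace 𝕜 E]
  {e : HilbertBasis ℕ 𝕜 E} {w : ℕ → ℝ} {W : E →L[𝕜] E}
  (hW : ∀ n, W (e n) = (w n : 𝕜) • e (n + 1))
include hW

theorem pow_apply (k n : ℕ) : (W ^ k) (e n) = (powWeight w k n : 𝕜) • e (n + k) := by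
  induction k generalizing n with
  | zero => simp [powWeight]
  | succ k ih =>
    rw [pow_succ, mul_apply_eq_comp, hW, map_smul, ih, smul_smul, powWeight_succ,
      RCLike.ofReal_mul, mul_comm, add_right_comm, add_assoc]

theorem projection_apply_of_le (hw : ∀ n, 0 < w n) {k : ℕ} {P : E →L[𝕜] E}
    (hP : P * P = P)
    (hle : LinearMap.range ((W ^ k : E →L[𝕜] E) : E →ₗ[𝕜] E) ≤
      LinearMap.range (P : E →ₗ[𝕜] E))
    {n : ℕ} (hn : k ≤ n) : P (e n) = e n := by
  obtain ⟨m, rfl⟩ := Nat.exists_eq_add_of_le' hn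
  have hv : (powWeight w k m : 𝕜) ≠ 0 := RCLike.ofReal_ne_zero.2 (powWeight_pos hw k m).ne'
  have hmem : e (m + k) ∈ LinearMap.range (P : E →ₗ[𝕜] E) :=
    hle ⟨(powWeight w k m : 𝕜)⁻¹ • e m, by
      rw [coe_coe, map_smul, pow_apply hW, smul_smul, inv_mul_cancel₀ hv, one_smul]⟩
  exact (LinearMap.IsIdempotentElem.mem_range_iff (IsIdempotentElem.toLinearMap hP)).1 hmem

variable [CompleteSpace E]

theorem adjoint_pow_apply_add (k n : ℕ) :
    adjoint (W ^ k) (e (n + k)) = (powWeight w k n : 𝕜) • e n :=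
  e.adjoint_apply_eq_of_inner _ fun m => by
    rw [pow_apply hW, inner_smul_left, inner_smul_right, RCLike.conj_ofReal]
    rcases eq_or_ne m n with rfl | hmn
    · rw [inner_self_eq_norm_sq_to_K, inner_self_eq_norm_sq_to_K, e.orthonormal.norm_eq_one,
        e.orthonormal.norm_eq_one]
    · rw [e.orthonormal.inner_eq_zero hmn, e.orthonormal.inner_eq_zero (by omega), mul_zero,
        mul_zero]

theorem adjoint_pow_apply_of_lt {k m : ℕ} (hm : m < k) : adjoint (W ^ k) (e m) = 0 :=
  e.adjoint_apply_eq_of_inner _ fun n => by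
    rw [pow_apply hW, inner_smul_left, e.orthonormal.inner_eq_zero (by omega), mul_zero,
      inner_zero_right]

theorem adjoint_pow_mul_pow_apply (k n : ℕ) :
    (adjoint (W ^ k) * W ^ k) (e n) = ((powWeight w k n ^ 2 : ℝ) : 𝕜) • e n := by
  rw [mul_apply_eq_comp, pow_apply hW, map_smul, adjoint_pow_apply_add hW, smul_smul,
    RCLike.ofReal_pow, sq]

theorem projection_apply_of_lt {k : ℕ} {P : E →L[𝕜] E} (hPadj : adjoint P = P)
    (hle : LinearMap.range (P : E →ₗ[𝕜] E) ≤
      (LinearMap.range ((W ^ k : E →L[𝕜] E) : E →ₗ[𝕜] E)).topologicalClosure)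
    {m : ℕ} (hm : m < k) : P (e m) = 0 := by
  have hmem : e m ∈ (LinearMap.range (P : E →ₗ[𝕜] E))ᗮ := by
    refine Submodule.orthogonal_le hle ?_
    rw [Submodule.orthogonal_closure, orthogonal_range]
    exact adjoint_pow_apply_of_lt hW hm
  rwa [(isSelfAdjoint_iff'.2 hPadj).isSymmetric.orthogonal_range] at hmem

variable {c : ℝ} (hc : 0 < c) (hcw : ∀ n, c ≤ w n)
include hc hcw

theorem isUnit_adjoint_pow_mul_pow (k : ℕ) : IsUnit (adjoint (W ^ k) * W ^ k) :=
  e.isUnit_of_apply_eq_smul (adjoint_pow_mul_pow_apply hW k) (pow_pos (pow_pos hc k) 2)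
    fun n => pow_le_pow_left₀ (pow_nonneg hc.le k) (pow_le_powWeight hc.le hcw k n) 2

theorem adjoint_pow_mul_inverse_mul_pow_apply (k n : ℕ) :
    (adjoint (W ^ k) * Ring.inverse (adjoint (W ^ k) * W ^ k) * W ^ k) (e n) =
      (((powWeight w k n / powWeight w k (n + k)) ^ 2 : ℝ) : 𝕜) • e n := by
  have hv : ((powWeight w k (n + k) ^ 2 : ℝ) : 𝕜) ≠ 0 := RCLike.ofReal_ne_zero.2
    (pow_ne_zero 2 (powWeight_pos (fun n => hc.trans_le (hcw n)) k _).ne')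
  rw [mul_apply_eq_comp, mul_apply_eq_comp, pow_apply hW, map_smul,
    (isUnit_adjoint_pow_mul_pow hW hc hcw k).ringInverse_apply_of_apply_eq_smul hv
      (adjoint_pow_mul_pow_apply hW k (n + k)), map_smul, map_smul, adjoint_pow_apply_add hW,
    smul_smul, smul_smul]
  congr 1
  push_cast
  field_simp

variable {k : ℕ} {P : E →L[𝕜] E} (hP : P * P = P) (hPadj : adjoint P = P)
  (hrange : LinearMap.range (P : E →ₗ[𝕜] E) =
    (LinearMap.range ((W ^ k : E →L[𝕜] E) : E →ₗ[𝕜] E)).topologicalClosure)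
include hP hPadj hrange

theorem sub_projection_apply (n : ℕ) :
    (adjoint (W ^ k) * Ring.inverse (adjoint (W ^ k) * W ^ k) * W ^ k - P) (e n) =
      (((powWeight w k n / powWeight w k (n + k)) ^ 2 - if k ≤ n then 1 else 0 : ℝ) : 𝕜) •
        e n := by
  rw [sub_apply, adjoint_pow_mul_inverse_mul_pow_apply hW hc hcw, RCLike.ofReal_sub, sub_smul]
  split_ifs with hn
  · rw [projection_apply_of_le hW (fun n => hc.trans_le (hcw n)) hP
      (hrange ▸ Submodule.le_topologicalClosure _) hn, RCLike.ofReal_one, one_smul]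
  · rw [projection_apply_of_lt hW hPadj hrange.le (not_le.1 hn), RCLike.ofReal_zero, zero_smul]

theorem isPositive_sub_projection_iff :
    (adjoint (W ^ k) * Ring.inverse (adjoint (W ^ k) * W ^ k) * W ^ k - P).IsPositive ↔
      ∀ n, k ≤ n → 1 ≤ ∏ j ∈ Finset.range k, w (n + j) / w (k + n + j) := by
  rw [e.isPositive_iff_of_apply_eq_smul (sub_projection_apply hW hc hcw hP hPadj hrange)]
  refine forall_congr' fun n => ?_
  have hw : ∀ n, 0 < w n := fun n => hc.trans_le (hcw n)
  have hratio := div_pos (powWeight_pos hw k n) (powWeight_pos hw k (n + k))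
  split_ifs with hn
  · rw [sub_nonneg, one_le_sq_iff₀ hratio.le, powWeight_div_powWeight_add]
    exact ⟨fun h _ => h, fun h => h hn⟩
  · simp only [sub_zero, hn, false_imp_iff, iff_true]
    positivity

end WeightedShift

theorem stmt_7 {H : Type*} [NormedAddCommGroup H] [InnerProductSpace ℂ H] [CompleteSpace H]
    (e : HilbertBasis ℕ ℂ H) (w : ℕ → ℝ) (W : H →L[ℂ] H)
    (hinf : ∃ c : ℝ, 0 < c ∧ ∀ n, c ≤ w n)
    (hW : ∀ n, W (e n) = (w n : ℂ) • e (n + 1))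
    (k : ℕ) :
    (∀ P : H →L[ℂ] H, P * P = P → adjoint P = P →
        LinearMap.range (P : H →ₗ[ℂ] H) = (LinearMap.range ((W ^ k : H →L[ℂ] H) : H →ₗ[ℂ] H)).topologicalClosure →
        (adjoint (W ^ k) * Ring.inverse (adjoint (W ^ k) * W ^ k) * W ^ k - P).IsPositive)
      ↔ ∀ n, k ≤ n → 1 ≤ ∏ j ∈ Finset.range k, w (n + j) / w (k + n + j) := by
  obtain ⟨c, hc, hcw⟩ := hinf
  refine ⟨fun h => ?_, fun h P hP hPadj hrange =>
    (WeightedShift.isPositive_sub_projection_iff hW hc hcw hP hPadj hrange).2 h⟩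
  set K := (LinearMap.range ((W ^ k : H →L[ℂ] H) : H →ₗ[ℂ] H)).topologicalClosure
  have hP : K.starProjection * K.starProjection = K.starProjection :=
    K.isIdempotentElem_starProjection
  have hPadj : adjoint K.starProjection = K.starProjection :=
    isSelfAdjoint_iff'.1 (isSelfAdjoint_starProjection K)
  exact (WeightedShift.isPositive_sub_projection_iff hW hc hcw hP hPadj
    K.range_starProjection).1 (h _ hP hPadj K.range_starProjection)
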